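/- arXiv:1008.4033 — 4 statements merged into one kernel-verified Lean document; each statement's English description precedes it below -/
import Mathlib

section
/- Define EJ : List ℕ → ℝ → ℝ on words (multi-indices) over the alphabet ℕ recursively by EJ [] t = 1, and for a nonempty word α with last letter a: if a = 0 then EJ α t = ∫₀ᵗ EJ (α.dropLast) s ds; if a ≠ 0 and the second-to-last letter of α equals a, then EJ α t = (1/2) ∫₀ᵗ EJ (α.dropLast.dropLast) s ds; otherwise EJ α t = 0. Then for every word α, either EJ α t = 0 for all t, or EJ α t = (1/2)^(k/2) * t^q / q! where k is the number of nonzero letters of α, q = k/2 + z, and z is the number of zero letters of α. -/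
open intervalIntegral

noncomputable def EJrev : List ℕ → ℝ → ℝ
  | [], _ => 1
  | [a], t => if a = 0 then ∫ s in (0:ℝ)..t, EJrev [] s else 0
  | a :: b :: rest, t =>
      if a = 0 then ∫ s in (0:ℝ)..t, EJrev (b :: rest) s
      else if b = a then (1/2) * ∫ s in (0:ℝ)..t, EJrev rest s
      else 0

/-- Expectation of the Stratonovich iterated integral `J_α(t)`, defined by the
recursion on the last letter of the word. -/
noncomputable def EJ (α : List ℕ) (t : ℝ) : ℝ := EJrev α.reverse t

/-- A block is `[0]` or `[m,m]` with `m ≠ 0`. -/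
def IsBlock (b : List ℕ) : Prop := b = [0] ∨ ∃ m : ℕ, m ≠ 0 ∧ b = [m, m]

/-- A word is admissible if it is a concatenation of blocks. -/
def Admissible (α : List ℕ) : Prop :=
  ∃ L : List (List ℕ), (∀ b ∈ L, IsBlock b) ∧ L.flatten = α

lemma integ_aux (C : ℝ) (q : ℕ) (t : ℝ) :
    (∫ s in (0:ℝ)..t, C * s ^ q / Nat.factorial q)
      = C * t ^ (q + 1) / Nat.factorial (q + 1) := by
  have h : (fun s : ℝ => C * s ^ q / Nat.factorial q)
      = fun s : ℝ => (C / Nat.factorial q) * s ^ q := by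
    funext s; ring
  rw [h, intervalIntegral.integral_const_mul, integral_pow]
  rw [zero_pow (Nat.succ_ne_zero q), sub_zero, Nat.factorial_succ]
  have h1 : (Nat.factorial q : ℝ) ≠ 0 := by exact_mod_cast Nat.factorial_ne_zero q
  have h2 : ((q : ℝ) + 1) ≠ 0 := by positivity
  push_cast
  rw [div_mul_div_comm, mul_comm ((Nat.factorial q : ℝ)) ((q:ℝ)+1)]

lemma EJrev_zero (b : ℕ) (rest : List ℕ) (t : ℝ) :
    EJrev (0 :: b :: rest) t = ∫ s in (0:ℝ)..t, EJrev (b :: rest) s := by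
  simp [EJrev]

lemma EJrev_pair (a : ℕ) (ha : a ≠ 0) (rest : List ℕ) (t : ℝ) :
    EJrev (a :: a :: rest) t = (1/2) * ∫ s in (0:ℝ)..t, EJrev rest s := by
  simp [EJrev, ha]

def Q (l : List ℕ) : ℕ := (l.filter (· ≠ 0)).length / 2 + l.count 0

lemma key : ∀ (n : ℕ) (l : List ℕ), l.length ≤ n →
    (∀ t : ℝ, EJrev l t = 0) ∨
    (∀ t : ℝ, EJrev l t =
      (1/2 : ℝ) ^ ((l.filter (· ≠ 0)).length / 2) * t ^ Q l / Nat.factorial (Q l)) := by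
  intro n
  induction n with
  | zero =>
    intro l hl
    have : l = [] := List.eq_nil_of_length_eq_zero (Nat.le_zero.mp hl)
    subst this
    right
    intro t
    simp [EJrev, Q]
  | succ n ih =>
    intro l hl
    match l with
    | [] =>
      right; intro t; simp [EJrev, Q]
    | [a] =>
      by_cases ha : a = 0
      · subst ha
        right
        intro t
        simp [EJrev, Q, intervalIntegral.integral_const]
      · left
        intro t
        simp [EJrev, ha]
    | a :: b :: rest =>
      by_cases ha : a = 0
      · subst ha
        have hlen : (b :: rest).length ≤ n := by
          simpa using Nat.succ_le_succ_iff.mp hl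
        rcases ih (b :: rest) hlen with h | h
        · left
          intro t
          rw [EJrev_zero]
          simp [h]
        · right
          intro t
          rw [EJrev_zero]
          simp only [h]
          rw [integ_aux]
          have hfil : ((0 :: b :: rest).filter (· ≠ 0)) = ((b :: rest).filter (· ≠ 0)) := by
            simp
          have hQ : Q (0 :: b :: rest) = Q (b :: rest) + 1 := by
            simp only [Q, hfil, List.count_cons_self]
            omega
          rw [hQ, hfil]
      · by_cases hb : b = a
        · subst hb
          have hlen : rest.length ≤ n := by
            have := Nat.succ_le_succ_iff.mp hl
            simp at this
            omega
          rcases ih rest hlen with h | h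
          · left
            intro t
            rw [EJrev_pair b ha]
            simp [h]
          · right
            intro t
            rw [EJrev_pair b ha]
            simp only [h]
            rw [integ_aux]
            have hbB : (decide (b ≠ 0)) = true := by simp [ha]
            have hfil : ((b :: b :: rest).filter (· ≠ 0)) = b :: b :: (rest.filter (· ≠ 0)) := by
              simp [List.filter_cons, hbB, ha]
            have hk : ((b :: b :: rest).filter (· ≠ 0)).length / 2
                = (rest.filter (· ≠ 0)).length / 2 + 1 := by
              rw [hfil]
              simp only [List.length_cons]
              omega
            have hc : (b :: b :: rest).count 0 = rest.count 0 := by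
              simp [List.count_cons, ha]
            have hQ : Q (b :: b :: rest) = Q rest + 1 := by
              simp only [Q, hk, hc]
              omega
            rw [hQ, hk, pow_succ]
            ring
        · left
          intro t
          simp [EJrev, ha, hb]

theorem stmt0 (α : List ℕ) :
    (∀ t : ℝ, EJ α t = 0) ∨
    (∀ t : ℝ,
      EJ α t = (1/2 : ℝ) ^ ((α.filter (· ≠ 0)).length / 2) *
        t ^ ((α.filter (· ≠ 0)).length / 2 + α.count 0) /
        (Nat.factorial ((α.filter (· ≠ 0)).length / 2 + α.count 0))) := by
  have h := key α.reverse.length α.reverse le_rfl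
  have hfil : (α.reverse.filter (· ≠ 0)).length = (α.filter (· ≠ 0)).length := by
    rw [List.filter_reverse, List.length_reverse]
  have hcnt : α.reverse.count 0 = α.count 0 := List.count_reverse
  have hQ : Q α.reverse = (α.filter (· ≠ 0)).length / 2 + α.count 0 := by
    simp [Q, hfil, hcnt]
  rcases h with h | h
  · left; intro t; exact h t
  · right
    intro t
    have := h t
    rw [hfil, hQ] at this
    exact this
end

section
/- With EJ defined by the recursion above, EJ α t ≠ 0 for some t > 0 if and only if α belongs to the language of words generated by concatenating the single letter 0 and doubled letters mm with m ≠ 0 (i.e., α can be written as a concatenation of blocks, each block being either [0] or [m, m] for some m ≠ 0). -/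
open intervalIntegral

/-!
Read from its first letter, `EJrev` integrates once per letter `0` and once per doubled
letter `m m`, and vanishes as soon as it meets a nonzero letter that is not doubled.
Hence `EJrev β` is the monomial `C * t ^ k` with `C ≠ 0` exactly when `β` parses into
blocks, and is identically zero otherwise. Blocks are palindromes, so `β = α.reverse`
parses into blocks iff `α` does.
-/

section Admissible

variable {l r : List ℕ} {m a : ℕ}

theorem IsBlock.reverse_eq {b : List ℕ} (h : IsBlock b) : b.reverse = b := by
  rcases h with rfl | ⟨m, -, rfl⟩ <;> rfl

theorem Admissible.nil : Admissible [] := ⟨[], by simp, rfl⟩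

theorem IsBlock.admissible {b : List ℕ} (h : IsBlock b) : Admissible b :=
  ⟨[b], by simpa using h, by simp⟩

theorem Admissible.append (hl : Admissible l) (hr : Admissible r) : Admissible (l ++ r) := by
  obtain ⟨L, hL, rfl⟩ := hl
  obtain ⟨R, hR, rfl⟩ := hr
  exact ⟨L ++ R, by simpa [or_imp, forall_and] using ⟨hL, hR⟩, by simp⟩

theorem Admissible.reverse (h : Admissible l) : Admissible l.reverse := by
  obtain ⟨L, hL, rfl⟩ := h
  induction L with
  | nil => exact Admissible.nil
  | cons b L ih =>
    have hb : IsBlock b := hL b List.mem_cons_self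
    rw [List.flatten_cons, List.reverse_append, hb.reverse_eq]
    exact (ih fun c hc => hL c (List.mem_cons_of_mem _ hc)).append hb.admissible

theorem admissible_reverse_iff : Admissible l.reverse ↔ Admissible l :=
  ⟨fun h => by simpa using h.reverse, Admissible.reverse⟩

theorem Admissible.exists_block_append (h : Admissible l) (hl : l ≠ []) :
    ∃ b r, IsBlock b ∧ Admissible r ∧ l = b ++ r := by
  obtain ⟨_ | ⟨b, L⟩, hL, rfl⟩ := h
  · exact absurd rfl hl
  · exact ⟨b, L.flatten, hL b List.mem_cons_self,
      ⟨L, fun c hc => hL c (List.mem_cons_of_mem _ hc), rfl⟩, rfl⟩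

theorem admissible_zero_cons : Admissible (0 :: l) ↔ Admissible l := by
  refine ⟨fun h => ?_, fun h => IsBlock.admissible (Or.inl rfl) |>.append h⟩
  obtain ⟨b, r, hb | ⟨m, hm, hb⟩, hr, hl⟩ := h.exists_block_append (List.cons_ne_nil _ _)
  · simp_all
  · simp_all [eq_comm]

theorem not_admissible_singleton (hm : m ≠ 0) : ¬ Admissible [m] := fun h => by
  obtain ⟨b, r, hb | ⟨n, -, hb⟩, -, hl⟩ := h.exists_block_append (List.cons_ne_nil _ _)
  · simp_all
  · simp_all

theorem admissible_cons_cons (hm : m ≠ 0) : Admissible (m :: a :: l) ↔ a = m ∧ Admissible l := by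
  refine ⟨fun h => ?_, ?_⟩
  · obtain ⟨c, r, hc | ⟨n, -, hc⟩, hr, hl⟩ := h.exists_block_append (List.cons_ne_nil _ _)
    · simp_all
    · simp_all
  · rintro ⟨rfl, h⟩
    exact (IsBlock.admissible (Or.inr ⟨a, hm, rfl⟩)).append h

end Admissible

section EJrev

variable {l : List ℕ} {m b : ℕ} {t : ℝ}

theorem EJrev_zero_cons : EJrev (0 :: l) t = ∫ s in (0:ℝ)..t, EJrev l s := by
  cases l <;> simp [EJrev]

theorem EJrev_cons_cons_self (hm : m ≠ 0) :
    EJrev (m :: m :: l) t = (1/2) * ∫ s in (0:ℝ)..t, EJrev l s := by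
  simp [EJrev, hm]

theorem EJrev_singleton (hm : m ≠ 0) : EJrev [m] t = 0 := by
  simp [EJrev, hm]

theorem EJrev_cons_cons_of_ne (hm : m ≠ 0) (hb : b ≠ m) : EJrev (m :: b :: l) t = 0 := by
  simp [EJrev, hm, hb]

end EJrev

theorem integral_eq_monomial_of_eq_monomial {f : ℝ → ℝ} {C : ℝ} {k : ℕ}
    (hf : ∀ t, f t = C * t ^ k) (t : ℝ) :
    ∫ s in (0:ℝ)..t, f s = C / (k + 1) * t ^ (k + 1) := by
  simp only [hf, intervalIntegral.integral_const_mul, integral_pow]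
  ring

theorem EJrev_eq_monomial : ∀ β : List ℕ,
    ∃ (C : ℝ) (k : ℕ), (C ≠ 0 ↔ Admissible β) ∧ ∀ t, EJrev β t = C * t ^ k
  | [] => ⟨1, 0, by simp [Admissible.nil], fun t => by simp [EJrev]⟩
  | 0 :: l => by
    obtain ⟨C, k, hC, hE⟩ := EJrev_eq_monomial l
    refine ⟨C / (k + 1), k + 1, ?_, fun t => ?_⟩
    · rw [admissible_zero_cons, ← hC]
      exact div_ne_zero_iff.trans (and_iff_left (by positivity))
    · rw [EJrev_zero_cons, integral_eq_monomial_of_eq_monomial hE]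
  | [m + 1] => ⟨0, 0, by simp [not_admissible_singleton], fun t => by simp [EJrev_singleton]⟩
  | (m + 1) :: b :: l => by
    by_cases hb : b = m + 1
    · subst hb
      obtain ⟨C, k, hC, hE⟩ := EJrev_eq_monomial l
      refine ⟨C / (k + 1) / 2, k + 1, ?_, fun t => ?_⟩
      · rw [admissible_cons_cons m.add_one_ne_zero, ← hC, div_ne_zero_iff, div_ne_zero_iff,
          and_iff_left two_ne_zero, and_iff_left (by positivity), and_iff_right rfl]
      · rw [EJrev_cons_cons_self m.add_one_ne_zero, integral_eq_monomial_of_eq_monomial hE]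
        ring
    · exact ⟨0, 0, by simp [admissible_cons_cons, hb],
        fun t => by simp [EJrev_cons_cons_of_ne, hb]⟩

theorem stmt1 (α : List ℕ) :
    (∃ t : ℝ, 0 < t ∧ EJ α t ≠ 0) ↔ Admissible α := by
  obtain ⟨C, k, hC, hE⟩ := EJrev_eq_monomial α.reverse
  rw [← admissible_reverse_iff, ← hC]
  simp only [EJ, hE]
  exact ⟨fun ⟨t, _, h⟩ => left_ne_zero_of_mul h, fun h => ⟨1, one_pos, by simpa using h⟩⟩
end

section
/- If α is a concatenation of blocks [0] and [m,m] (m≠0) with b₁ blocks of the second kind and b₀ blocks of the first kind, then EJ α t = (1/2)^{b₁} · t^{b₀+b₁}/(b₀+b₁)!; in particular EJ α depends only on the total number of blocks and the number of pair-blocks, not on the order of the blocks or the identities of the nonzero letters. -/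
open intervalIntegral

open scoped Nat

/-
Reading the word from the right, a block `[0]` contributes one integration `∫₀ᵗ` and a block
`[m, m]` one integration with a factor `1/2`. Starting from `EJ [] = 1`, `k` integrations
produce `t ^ k / k!`, and `k = b₀ + b₁` is the number of blocks.
-/

theorem EJ_append_zero (α : List ℕ) (t : ℝ) :
    EJ (α ++ [0]) t = ∫ s in (0:ℝ)..t, EJ α s := by
  cases h : α.reverse <;> simp [EJ, EJrev, h]

theorem EJ_append_pair {m : ℕ} (hm : m ≠ 0) (α : List ℕ) (t : ℝ) :
    EJ (α ++ [m, m]) t = (1/2) * ∫ s in (0:ℝ)..t, EJ α s := by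
  simp [EJ, EJrev, hm]

theorem integral_mul_pow_div_factorial (C : ℝ) (n : ℕ) (t : ℝ) :
    ∫ s in (0:ℝ)..t, C * s ^ n / n ! = C * t ^ (n + 1) / (n + 1)! := by
  simp only [mul_div_right_comm C, intervalIntegral.integral_const_mul, integral_pow,
    Nat.factorial_succ]
  push_cast
  field_simp
  simp

theorem List.count_add_length_filter_ne {β : Type*} [BEq β] [LawfulBEq β] [DecidableEq β]
    (a : β) (l : List β) : l.count a + (l.filter (· ≠ a)).length = l.length := by
  rw [List.count_eq_countP, List.countP_eq_length_filter,
    List.length_eq_length_filter_add (· == a) (l := l)]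
  simp [Bool.beq_eq_decide_eq]

theorem EJ_flatten_of_isBlock (L : List (List ℕ)) (hL : ∀ b ∈ L, IsBlock b) (t : ℝ) :
    EJ L.flatten t = (1/2 : ℝ) ^ (L.filter (· ≠ [0])).length * t ^ L.length / L.length ! := by
  induction L using List.reverseRecOn generalizing t with
  | nil => simp [EJ, EJrev]
  | append_singleton L b ih =>
    have ih' : ∀ s, EJ L.flatten s = _ := ih (fun b hb => hL b (by simp [hb]))
    rcases hL b (by simp) with rfl | ⟨m, hm, rfl⟩
    · have hfilter : (L ++ [[0]]).filter (· ≠ [0]) = L.filter (· ≠ [0]) := by simp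
      rw [List.flatten_append, List.flatten_singleton, EJ_append_zero, hfilter,
        List.length_append, List.length_singleton]
      simp_rw [ih', integral_mul_pow_div_factorial]
    · have hfilter : (L ++ [[m, m]]).filter (· ≠ [0]) = L.filter (· ≠ [0]) ++ [[m, m]] := by
        simp [hm]
      rw [List.flatten_append, List.flatten_singleton, EJ_append_pair hm, hfilter,
        List.length_append, List.length_append, List.length_singleton, pow_succ]
      simp_rw [ih', integral_mul_pow_div_factorial]
      ring

theorem stmt11 (α : List ℕ) (L : List (List ℕ))
    (hL : ∀ b ∈ L, IsBlock b) (hjoin : L.flatten = α)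
    (b₀ b₁ : ℕ) (hb₀ : b₀ = L.count [0]) (hb₁ : b₁ = (L.filter (· ≠ [0])).length) :
    ∀ t : ℝ, EJ α t = (1/2 : ℝ) ^ b₁ * t ^ (b₀ + b₁) / (Nat.factorial (b₀ + b₁)) := by
  intro t
  rw [hb₀, hb₁, List.count_add_length_filter_ne, ← hjoin, EJ_flatten_of_isBlock L hL]
end

section
/- If α has odd length and contains no zero letters, then EJ α t = 0 for all t. -/
open intervalIntegral

lemma aux15 (β : List ℕ) (hodd : Odd β.length) (hz : ∀ a ∈ β, a ≠ 0) :
    ∀ t : ℝ, EJrev β t = 0 := by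
  match β with
  | [] => simp at hodd
  | [a] =>
    intro t
    simp [EJrev, hz a (by simp)]
  | a :: b :: rest =>
    have ha := hz a (by simp)
    have hrodd : Odd rest.length := by
      rcases hodd with ⟨k, hk⟩
      simp only [List.length_cons] at hk
      exact ⟨k - 1, by omega⟩
    have ih := aux15 rest hrodd (fun x hx => hz x (by simp [hx]))
    intro t
    simp only [EJrev, if_neg ha]
    by_cases hb : b = a
    · rw [if_pos hb]
      simp [ih]
    · rw [if_neg hb]

theorem stmt15 (α : List ℕ) (hodd : Odd α.length) (hzero : ∀ a ∈ α, a ≠ 0) :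
    ∀ t : ℝ, EJ α t = 0 := by
  intro t
  exact aux15 α.reverse (by simpa using hodd) (fun x hx => hzero x (by simpa using hx)) t
end
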